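/- Define f(k,i) := (C(k,i)/2^k)·log₂(2^k/C(k,i)) for integers 0 ≤ i ≤ k. For every integer k ≥ 9 and every integer i with 0 ≤ i ≤ k: if i < ⌊k/2⌋ then f(k,i) ≤ f(k−1,i), and if 2i ≥ k then f(k,i) ≤ f(k−1,i−1). -/

import Mathlib

/-!
Writing `p = C(k,i)/2^k`, the summand is `f(k,i) = -p log₂ p`, and `x ↦ -x log x` is increasing
on `[0, 1/e]`. From `C(k,i)(k-i) = k C(k-1,i)` we get `C(k,i) ≤ 2 C(k-1,i)` when `2i ≤ k`, and by
symmetry `C(k,i) ≤ 2 C(k-1,i-1)` when `2i ≥ k`; either way `p` is at most a weight `q` of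
`Bin(k-1)`. Since the weights of `Bin(n+1)` are averages of those of `Bin(n)`, for `k - 1 ≥ 8`
we have `q ≤ C(8,4)/2^8 = 70/256 < 1/e`.
-/

/-- The individual summand `f(k,i) := (C(k,i)/2^k)·log₂(2^k/C(k,i))` of the entropy
of the binomial distribution `Bin(k)`. -/
noncomputable def f (k i : ℕ) : ℝ :=
  ((k.choose i : ℝ) / 2^k) * Real.logb 2 ((2^k : ℝ) / (k.choose i))

open Real

noncomputable def binomWeight (k i : ℕ) : ℝ := (k.choose i : ℝ) / 2 ^ k

lemma binomWeight_nonneg (n i : ℕ) : 0 ≤ binomWeight n i := by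
  unfold binomWeight; positivity

lemma f_eq_neg_mul_log_div_log_two (k i : ℕ) :
    f k i = -(binomWeight k i * log (binomWeight k i)) / log 2 := by
  rw [f, binomWeight, logb, ← inv_div, log_inv]
  ring

lemma f_le_f_of_binomWeight_le {k i m j : ℕ} (h : binomWeight k i ≤ binomWeight m j)
    (hq : binomWeight m j ≤ exp (-1)) : f k i ≤ f m j := by
  have hp := binomWeight_nonneg k i
  rw [f_eq_neg_mul_log_div_log_two, f_eq_neg_mul_log_div_log_two]
  have hanti := mul_log_strictAntiOn.antitoneOn ⟨hp, h.trans hq⟩ ⟨hp.trans h, hq⟩ h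
  exact div_le_div_of_nonneg_right (neg_le_neg hanti) (log_nonneg one_le_two)

lemma binomWeight_succ_zero (n : ℕ) : binomWeight (n + 1) 0 = binomWeight n 0 / 2 := by
  simp only [binomWeight, Nat.choose_zero_right, pow_succ]
  ring

lemma binomWeight_succ_succ (n i : ℕ) :
    binomWeight (n + 1) (i + 1) = (binomWeight n i + binomWeight n (i + 1)) / 2 := by
  simp only [binomWeight, Nat.choose_succ_succ, pow_succ]
  push_cast
  ring

lemma binomWeight_le_of_le {m n : ℕ} {c : ℝ} (h : ∀ i, binomWeight m i ≤ c) (hmn : m ≤ n)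
    (i : ℕ) : binomWeight n i ≤ c := by
  induction n, hmn using Nat.le_induction generalizing i with
  | base => exact h i
  | succ n _ ih =>
    cases i with
    | zero => linarith [binomWeight_succ_zero n, binomWeight_nonneg n 0, ih 0]
    | succ i => linarith [binomWeight_succ_succ n i, ih i, ih (i + 1)]

lemma binomWeight_le_exp_neg_one {m : ℕ} (hm : 8 ≤ m) (i : ℕ) : binomWeight m i ≤ exp (-1) := by
  have h8 : ∀ i, binomWeight 8 i ≤ 70 / 256 := fun i ↦ by
    have : (Nat.choose 8 i : ℝ) ≤ 70 := by exact_mod_cast Nat.choose_le_middle i 8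
    rw [binomWeight]
    linarith
  refine (binomWeight_le_of_le h8 hm i).trans ?_
  rw [exp_neg, le_inv_comm₀ (by norm_num) (exp_pos 1)]
  linarith [exp_one_lt_d9]

lemma choose_le_two_mul_choose_pred {k i : ℕ} (h : 2 * i ≤ k) :
    k.choose i ≤ 2 * (k - 1).choose i := by
  obtain _ | m := k
  · exact Nat.le_mul_of_pos_left _ two_pos
  have hrec := Nat.choose_mul_succ_eq m i
  simp only [Nat.add_sub_cancel]
  refine Nat.le_of_mul_le_mul_right ?_ (Nat.succ_pos m)
  have : (m + 1).choose i * (m + 1) ≤ (m + 1).choose i * (2 * (m + 1 - i)) :=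
    Nat.mul_le_mul_left _ (by omega)
  linarith

lemma choose_le_two_mul_choose_pred_pred {k i : ℕ} (h : k ≤ 2 * i) :
    k.choose i ≤ 2 * (k - 1).choose (i - 1) := by
  rcases lt_or_ge k i with hki | hik
  · simp [Nat.choose_eq_zero_of_lt hki]
  obtain _ | i := i
  · simp
  rw [← Nat.choose_symm hik, ← Nat.choose_symm (show i + 1 - 1 ≤ k - 1 by omega),
    show k - 1 - (i + 1 - 1) = k - (i + 1) by omega]
  exact choose_le_two_mul_choose_pred (by omega)

lemma binomWeight_le_pred_of_choose_le {k i j : ℕ} (hk : 1 ≤ k)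
    (h : k.choose i ≤ 2 * (k - 1).choose j) : binomWeight k i ≤ binomWeight (k - 1) j := by
  obtain ⟨m, rfl⟩ := Nat.exists_eq_add_of_le' hk
  have h' : ((m + 1).choose i : ℝ) ≤ 2 * m.choose j := by exact_mod_cast h
  simp only [binomWeight, Nat.add_sub_cancel, pow_succ]
  rw [div_le_div_iff₀ (by positivity) (by positivity)]
  nlinarith [(by positivity : (0 : ℝ) < 2 ^ m)]

lemma f_le_f_pred_of_choose_le {k i j : ℕ} (hk : 9 ≤ k)
    (h : k.choose i ≤ 2 * (k - 1).choose j) : f k i ≤ f (k - 1) j :=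
  f_le_f_of_binomWeight_le (binomWeight_le_pred_of_choose_le (by omega) h)
    (binomWeight_le_exp_neg_one (by omega) j)

theorem stmt_6_general (k : ℕ) (hk : 9 ≤ k) (i : ℕ) :
    (i < k / 2 → f k i ≤ f (k-1) i) ∧ (k ≤ 2 * i → f k i ≤ f (k-1) (i-1)) :=
  ⟨fun hi ↦ f_le_f_pred_of_choose_le hk (choose_le_two_mul_choose_pred (by omega)),
    fun hi ↦ f_le_f_pred_of_choose_le hk (choose_le_two_mul_choose_pred_pred hi)⟩

/-- For every `k ≥ 9` and `0 ≤ i ≤ k`: if `i < ⌊k/2⌋` then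
`f(k,i) ≤ f(k−1,i)`, and if `2i ≥ k` then `f(k,i) ≤ f(k−1,i−1)`. -/
theorem stmt_6 (k : ℕ) (hk : 9 ≤ k) (i : ℕ) (hik : i ≤ k) :
    (i < k / 2 → f k i ≤ f (k-1) i) ∧ (k ≤ 2 * i → f k i ≤ f (k-1) (i-1)) :=
  stmt_6_general k hk i
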